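/- Let (M_n) be a locally square integrable real martingale with M_0 = 0. Then for all x > 0, y > 0, a ≥ 0 and b > 0, P(|M_n|/(a + b⟨M⟩_n) ≥ x and ⟨M⟩_n ≥ [M]_n + y) ≤ 2 exp(−x²(ab + b²y/2)). -/

import Mathlib

/-! For `l : ℝ`, `Z_n = exp (l M_n - l²/2 ([M]_n + ⟨M⟩_n))` is a supermartingale with `Z_0 = 1`:
conditionally on `F_n`, the increment `d` contributes the factor `exp (l d - l²/2 d²) ≤ 1 + l d + l²/2 d²`,
whose conditional expectation is at most `1 + l²/2 E[d² | F_n] ≤ exp (l²/2 E[d² | F_n])`.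
Hence `E Z_n ≤ 1`, and Chernoff's bound gives `P(l M_n - l²/2 ([M]_n + ⟨M⟩_n) ≥ c) ≤ exp (-c)`.
On the event of the theorem, taking `l = ± x b` according to the sign of `M_n`, this exponent is at
least `x² (a b + b² y / 2)`; the two signs give the factor `2`. -/

open MeasureTheory ProbabilityTheory Real Finset

lemma mul_sub_sq_le_half (l u : ℝ) : l * u - l ^ 2 / 2 * u ^ 2 ≤ 1 / 2 := by
  nlinarith [sq_nonneg (l * u - 1)]

lemma exp_mul_sub_sq_le_one_add (l u : ℝ) :
    exp (l * u - l ^ 2 / 2 * u ^ 2) ≤ 1 + l * u + l ^ 2 / 2 * u ^ 2 := by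
  set t := l * u
  have ht : l * u - l ^ 2 / 2 * u ^ 2 = t - t ^ 2 / 2 := by ring
  have hpos : 0 < 1 - t + t ^ 2 / 2 := by nlinarith [sq_nonneg (t - 1)]
  have hinv : exp (t - t ^ 2 / 2) * (1 - t + t ^ 2 / 2) ≤ 1 := by
    calc exp (t - t ^ 2 / 2) * (1 - t + t ^ 2 / 2)
        ≤ exp (t - t ^ 2 / 2) * exp (-(t - t ^ 2 / 2)) := by
          gcongr; linarith [add_one_le_exp (-(t - t ^ 2 / 2))]
      _ = 1 := by rw [← exp_add, add_neg_cancel, exp_zero]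
  rw [ht, show l ^ 2 / 2 * u ^ 2 = t ^ 2 / 2 by ring]
  -- `(1 + t + t²/2)(1 - t + t²/2) = 1 + t⁴/4 ≥ 1`
  nlinarith [sq_nonneg (t ^ 2), exp_pos (t - t ^ 2 / 2)]

lemma exp_neg_mul_one_add_le_one (t : ℝ) : exp (-t) * (1 + t) ≤ 1 := by
  calc exp (-t) * (1 + t) ≤ exp (-t) * exp t := by gcongr; linarith [add_one_le_exp t]
    _ = 1 := by rw [← exp_add, neg_add_cancel, exp_zero]

section

variable {Ω : Type*} {m0 : MeasurableSpace Ω} {μ : Measure Ω}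

lemma integrable_exp_mul_sub_sq [IsFiniteMeasure μ] {d : Ω → ℝ} (hd : AEStronglyMeasurable d μ)
    (l : ℝ) : Integrable (fun ω => exp (l * d ω - l ^ 2 / 2 * d ω ^ 2)) μ := by
  refine .of_bound (by fun_prop) (exp (1 / 2)) (ae_of_all _ fun ω => ?_)
  rw [norm_of_nonneg (exp_pos _).le]
  exact exp_le_exp.2 (mul_sub_sq_le_half l (d ω))

lemma condExp_exp_mul_sub_sq_le [IsFiniteMeasure μ] {m : MeasurableSpace Ω} (hm : m ≤ m0)
    {d : Ω → ℝ} (hd : MemLp d 2 μ) (hd0 : μ[d | m] =ᵐ[μ] 0) (l : ℝ) :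
    μ[fun ω => exp (l * d ω - l ^ 2 / 2 * d ω ^ 2) | m]
      ≤ᵐ[μ] fun ω => 1 + l ^ 2 / 2 * μ[fun ω => d ω ^ 2 | m] ω := by
  have hd1 : Integrable d μ := hd.integrable one_le_two
  have hd2 : Integrable (fun ω => d ω ^ 2) μ := hd.integrable_sq
  have hexp := integrable_exp_mul_sub_sq (μ := μ) hd.aestronglyMeasurable l
  have hpoly : μ[(fun _ => (1 : ℝ)) + l • d + (l ^ 2 / 2) • fun ω => d ω ^ 2 | m]
      =ᵐ[μ] fun ω => 1 + l ^ 2 / 2 * μ[fun ω => d ω ^ 2 | m] ω := by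
    filter_upwards [condExp_add ((integrable_const 1).add (hd1.smul l)) (hd2.smul (l ^ 2 / 2)) m,
      condExp_add (integrable_const 1) (hd1.smul l) m, condExp_smul l d m,
      condExp_smul (l ^ 2 / 2) (fun ω => d ω ^ 2) m, hd0] with ω h1 h2 h3 h4 h5
    simp [h1, h2, h3, h4, h5, condExp_const hm]
  filter_upwards [condExp_mono hexp (((integrable_const 1).add (hd1.smul l)).add
    (hd2.smul (l ^ 2 / 2))) (ae_of_all _ fun ω => exp_mul_sub_sq_le_one_add l (d ω)), hpoly]
    with ω h1 h2
  exact h1.trans h2.le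

noncomputable section

def quadVar (M : ℕ → Ω → ℝ) (n : ℕ) (ω : Ω) : ℝ :=
  ∑ k ∈ Icc 1 n, (M k ω - M (k - 1) ω) ^ 2

def predQuadVar (μ : Measure Ω) (ℱ : Filtration ℕ m0) (M : ℕ → Ω → ℝ) (n : ℕ) (ω : Ω) : ℝ :=
  ∑ k ∈ Icc 1 n, (μ[fun ω' => (M k ω' - M (k - 1) ω') ^ 2 | ℱ (k - 1)]) ω

def expSupermartingale (μ : Measure Ω) (ℱ : Filtration ℕ m0) (M : ℕ → Ω → ℝ) (l : ℝ) (n : ℕ)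
    (ω : Ω) : ℝ :=
  exp (l * M n ω - l ^ 2 / 2 * (quadVar M n ω + predQuadVar μ ℱ M n ω))

end

variable {ℱ : Filtration ℕ m0} {M : ℕ → Ω → ℝ}

lemma quadVar_succ (n : ℕ) (ω : Ω) :
    quadVar M (n + 1) ω = quadVar M n ω + (M (n + 1) ω - M n ω) ^ 2 := by
  simp [quadVar, sum_Icc_succ_top]

lemma predQuadVar_succ (n : ℕ) (ω : Ω) :
    predQuadVar μ ℱ M (n + 1) ω =
      predQuadVar μ ℱ M n ω + (μ[fun ω' => (M (n + 1) ω' - M n ω') ^ 2 | ℱ n]) ω := by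
  simp [predQuadVar, sum_Icc_succ_top]

@[simp]
lemma quadVar_neg : quadVar (-M) = quadVar M := by
  ext n ω
  exact sum_congr rfl fun k _ => by simp only [Pi.neg_apply]; ring

@[simp]
lemma predQuadVar_neg : predQuadVar μ ℱ (-M) = predQuadVar μ ℱ M := by
  ext n ω
  refine sum_congr rfl fun k _ => ?_
  congr 2 with ω'
  simp only [Pi.neg_apply]
  ring

lemma stronglyAdapted_quadVar (hM : StronglyAdapted ℱ M) : StronglyAdapted ℱ (quadVar M) := by
  intro n
  refine Finset.stronglyMeasurable_fun_sum _ fun k hk => ?_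
  have hkn : k ≤ n := (mem_Icc.1 hk).2
  exact (((hM k).mono (ℱ.mono hkn)).sub ((hM (k - 1)).mono (ℱ.mono (by omega)))).pow 2

lemma stronglyAdapted_predQuadVar : StronglyAdapted ℱ (predQuadVar μ ℱ M) := by
  intro n
  refine Finset.stronglyMeasurable_fun_sum _ fun k hk => ?_
  exact stronglyMeasurable_condExp.mono (ℱ.mono ((Nat.sub_le k 1).trans (mem_Icc.1 hk).2))

lemma predQuadVar_nonneg (n : ℕ) : 0 ≤ᵐ[μ] predQuadVar μ ℱ M n := by
  have h : ∀ k, 0 ≤ᵐ[μ] μ[fun ω' => (M k ω' - M (k - 1) ω') ^ 2 | ℱ (k - 1)] := fun k =>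
    condExp_nonneg (ae_of_all _ fun ω => sq_nonneg _)
  filter_upwards [ae_all_iff.2 h] with ω hω
  exact sum_nonneg fun k _ => hω k

lemma mul_sub_quadVar_le (hM0 : M 0 = 0) (l : ℝ) (n : ℕ) (ω : Ω) :
    l * M n ω - l ^ 2 / 2 * quadVar M n ω ≤ n / 2 := by
  induction n with
  | zero => simp [quadVar, hM0]
  | succ n ih =>
    rw [quadVar_succ]
    push_cast
    linarith [mul_sub_sq_le_half l (M (n + 1) ω - M n ω)]

lemma expSupermartingale_le (hM0 : M 0 = 0) (l : ℝ) (n : ℕ) :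
    ∀ᵐ ω ∂μ, expSupermartingale μ ℱ M l n ω ≤ exp (n / 2) := by
  filter_upwards [predQuadVar_nonneg (ℱ := ℱ) (M := M) n] with ω hω
  have hV : 0 ≤ l ^ 2 / 2 * predQuadVar μ ℱ M n ω := mul_nonneg (by positivity) hω
  refine exp_le_exp.2 ?_
  linarith [mul_sub_quadVar_le hM0 l n ω]

lemma stronglyAdapted_expSupermartingale (hM : StronglyAdapted ℱ M) (l : ℝ) :
    StronglyAdapted ℱ (expSupermartingale μ ℱ M l) := fun n =>
  continuous_exp.comp_stronglyMeasurable <| ((hM n).const_mul l).sub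
    (((stronglyAdapted_quadVar hM n).add (stronglyAdapted_predQuadVar n)).const_mul _)

lemma integrable_expSupermartingale [IsFiniteMeasure μ] (hM : StronglyAdapted ℱ M)
    (hM0 : M 0 = 0) (l : ℝ) (n : ℕ) : Integrable (expSupermartingale μ ℱ M l n) μ := by
  refine .of_bound ((stronglyAdapted_expSupermartingale hM l n).mono (ℱ.le n)).aestronglyMeasurable
    (exp (n / 2)) ?_
  filter_upwards [expSupermartingale_le (μ := μ) (ℱ := ℱ) hM0 l n] with ω hω
  rwa [expSupermartingale, norm_of_nonneg (exp_pos _).le]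

lemma expSupermartingale_succ (l : ℝ) (n : ℕ) :
    expSupermartingale μ ℱ M l (n + 1) =
      (fun ω => expSupermartingale μ ℱ M l n ω *
          exp (-(l ^ 2 / 2 * μ[fun ω' => (M (n + 1) ω' - M n ω') ^ 2 | ℱ n] ω))) *
        fun ω => exp (l * (M (n + 1) ω - M n ω) - l ^ 2 / 2 * (M (n + 1) ω - M n ω) ^ 2) := by
  ext ω
  simp only [expSupermartingale, Pi.mul_apply, quadVar_succ, predQuadVar_succ, ← exp_add]
  ring_nf

namespace MeasureTheory.Martingale

lemma supermartingale_expSupermartingale [IsFiniteMeasure μ] (hM : Martingale M ℱ μ)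
    (hM0 : M 0 = 0) (hMsq : ∀ n, MemLp (M n) 2 μ) (l : ℝ) :
    Supermartingale (expSupermartingale μ ℱ M l) ℱ μ := by
  have hZ := stronglyAdapted_expSupermartingale (μ := μ) hM.stronglyAdapted l
  have hZint := integrable_expSupermartingale (μ := μ) hM.stronglyAdapted hM0 l
  refine supermartingale_nat hZ hZint fun n => ?_
  set V := μ[fun ω' => (M (n + 1) ω' - M n ω') ^ 2 | ℱ n]
  set H : Ω → ℝ := fun ω => expSupermartingale μ ℱ M l n ω * exp (-(l ^ 2 / 2 * V ω))
  have hH : StronglyMeasurable[ℱ n] H :=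
    (hZ n).mul (continuous_exp.comp_stronglyMeasurable (stronglyMeasurable_condExp.const_mul _).neg)
  have hd0 : μ[fun ω => M (n + 1) ω - M n ω | ℱ n] =ᵐ[μ] 0 := by
    filter_upwards [condExp_sub (hM.integrable (n + 1)) (hM.integrable n) (ℱ n),
      hM.condExp_ae_eq n.le_succ, hM.condExp_ae_eq le_rfl] with ω h1 h2 h3
    change μ[M (n + 1) - M n | ℱ n] ω = 0
    rw [h1, Pi.sub_apply, h2, h3, sub_self]
  have hdL2 : MemLp (fun ω => M (n + 1) ω - M n ω) 2 μ := (hMsq (n + 1)).sub (hMsq n)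
  have hpull := condExp_mul_of_stronglyMeasurable_left hH
    (by rw [← expSupermartingale_succ]; exact hZint (n + 1))
    (integrable_exp_mul_sub_sq hdL2.aestronglyMeasurable l)
  rw [expSupermartingale_succ]
  filter_upwards [hpull, condExp_exp_mul_sub_sq_le (ℱ.le n) hdL2 hd0 l] with ω h1 h2
  have hZpos : 0 < expSupermartingale μ ℱ M l n ω := exp_pos _
  rw [h1, Pi.mul_apply]
  calc H ω * _ ≤ H ω * (1 + l ^ 2 / 2 * V ω) := by gcongr
    _ = expSupermartingale μ ℱ M l n ω * (exp (-(l ^ 2 / 2 * V ω)) * (1 + l ^ 2 / 2 * V ω)) := by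
      ring
    _ ≤ expSupermartingale μ ℱ M l n ω :=
      mul_le_of_le_one_right hZpos.le (exp_neg_mul_one_add_le_one _)

lemma integral_expSupermartingale_le_one [IsProbabilityMeasure μ] (hM : Martingale M ℱ μ)
    (hM0 : M 0 = 0) (hMsq : ∀ n, MemLp (M n) 2 μ) (l : ℝ) (n : ℕ) :
    ∫ ω, expSupermartingale μ ℱ M l n ω ∂μ ≤ 1 := by
  have h := (hM.supermartingale_expSupermartingale hM0 hMsq l).setIntegral_le (Nat.zero_le n)
    MeasurableSet.univ
  simpa [setIntegral_univ, expSupermartingale, quadVar, predQuadVar, hM0] using h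

lemma measure_ge_le_exp_neg [IsProbabilityMeasure μ] (hM : Martingale M ℱ μ)
    (hM0 : M 0 = 0) (hMsq : ∀ n, MemLp (M n) 2 μ) (l c : ℝ) (n : ℕ) :
    μ {ω | c ≤ l * M n ω - l ^ 2 / 2 * (quadVar M n ω + predQuadVar μ ℱ M n ω)}
      ≤ ENNReal.ofReal (exp (-c)) := by
  have hint := integrable_expSupermartingale (μ := μ) hM.stronglyAdapted hM0 l n
  have h := measure_ge_le_exp_mul_mgf (μ := μ)
    (X := fun ω => l * M n ω - l ^ 2 / 2 * (quadVar M n ω + predQuadVar μ ℱ M n ω)) c zero_le_one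
    (by simp only [one_mul]; exact hint)
  rw [ENNReal.le_ofReal_iff_toReal_le (measure_ne_top _ _) (exp_pos _).le]
  calc (μ _).toReal = μ.real _ := rfl
    _ ≤ exp (-1 * c) * mgf _ μ 1 := h
    _ ≤ exp (-c) * 1 := by
      rw [neg_one_mul]
      gcongr
      simp only [mgf, one_mul]
      exact hM.integral_expSupermartingale_le_one hM0 hMsq l n
    _ = exp (-c) := mul_one _

end MeasureTheory.Martingale

end

lemma le_mul_abs_sub_of_le_div {x y a b m q v : ℝ} (hx : 0 < x) (hb : 0 ≤ b)
    (hxm : x ≤ |m| / (a + b * v)) (hqv : q + y ≤ v) :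
    x ^ 2 * (a * b + b ^ 2 * y / 2) ≤ x * b * |m| - (x * b) ^ 2 / 2 * (q + v) := by
  have hden : 0 < a + b * v := by
    by_contra! h
    exact (hx.trans_le hxm).not_ge (div_nonpos_of_nonneg_of_nonpos (abs_nonneg m) h)
  have hxm' : x * (a + b * v) ≤ |m| := (le_div_iff₀ hden).1 hxm
  nlinarith [mul_le_mul_of_nonneg_left hxm' (mul_nonneg hx.le hb),
    mul_le_mul_of_nonneg_left hqv (by positivity : 0 ≤ (x * b) ^ 2 / 2)]

theorem self_normalized_martingale_two_sided_inequality_general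
    {Ω : Type*} {m0 : MeasurableSpace Ω} {μ : Measure Ω} [IsProbabilityMeasure μ]
    {ℱ : Filtration ℕ m0} {M : ℕ → Ω → ℝ}
    (hM : Martingale M ℱ μ) (hM0 : M 0 = 0) (hMsq : ∀ n, MemLp (M n) 2 μ)
    (n : ℕ) {x y a b : ℝ} (hx : 0 < x) (hb : 0 < b) :
    μ {ω | x ≤ |M n ω| /
          (a + b * ∑ k ∈ Finset.Icc 1 n,
            (μ[fun ω' => (M k ω' - M (k - 1) ω') ^ 2 | ℱ (k - 1)]) ω) ∧
        (∑ k ∈ Finset.Icc 1 n, (M k ω - M (k - 1) ω) ^ 2) + y ≤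
          ∑ k ∈ Finset.Icc 1 n,
            (μ[fun ω' => (M k ω' - M (k - 1) ω') ^ 2 | ℱ (k - 1)]) ω}
      ≤ ENNReal.ofReal (2 * Real.exp (-x ^ 2 * (a * b + b ^ 2 * y / 2))) := by
  set c := x ^ 2 * (a * b + b ^ 2 * y / 2)
  have hsub : {ω | x ≤ |M n ω| / (a + b * predQuadVar μ ℱ M n ω) ∧
        quadVar M n ω + y ≤ predQuadVar μ ℱ M n ω} ⊆
      {ω | c ≤ x * b * M n ω - (x * b) ^ 2 / 2 * (quadVar M n ω + predQuadVar μ ℱ M n ω)} ∪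
      {ω | c ≤ x * b * (-M) n ω -
        (x * b) ^ 2 / 2 * (quadVar (-M) n ω + predQuadVar μ ℱ (-M) n ω)} := by
    rintro ω ⟨hxm, hqv⟩
    have hc := le_mul_abs_sub_of_le_div hx hb.le hxm hqv
    rw [quadVar_neg, predQuadVar_neg]
    rcases abs_choice (M n ω) with h | h <;> rw [h] at hc
    · exact Or.inl hc
    · exact Or.inr (by simpa using hc)
  calc μ _ ≤ μ (_ ∪ _) := measure_mono hsub
    _ ≤ _ + _ := measure_union_le _ _
    _ ≤ ENNReal.ofReal (exp (-c)) + ENNReal.ofReal (exp (-c)) :=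
      add_le_add (hM.measure_ge_le_exp_neg hM0 hMsq _ _ n)
        (hM.neg.measure_ge_le_exp_neg (by simp [hM0]) (fun k => (hMsq k).neg) _ _ n)
    _ = ENNReal.ofReal (2 * exp (-x ^ 2 * (a * b + b ^ 2 * y / 2))) := by
      rw [← ENNReal.ofReal_add (exp_pos _).le (exp_pos _).le, neg_mul, two_mul]

/-- Theorem 2.2, inequality (2.4): for a locally square integrable real martingale `M` with
`M 0 = 0`, for all `x, y > 0`, `a ≥ 0`, `b > 0`,
`P(|M n|/(a + b⟨M⟩_n) ≥ x, ⟨M⟩_n ≥ [M]_n + y) ≤ 2 exp(−x²(ab + b²y/2))`. -/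
theorem self_normalized_martingale_two_sided_inequality
    {Ω : Type*} {m0 : MeasurableSpace Ω} {μ : Measure Ω} [IsProbabilityMeasure μ]
    {ℱ : Filtration ℕ m0} {M : ℕ → Ω → ℝ}
    (hM : Martingale M ℱ μ) (hM0 : M 0 = 0) (hMsq : ∀ n, MemLp (M n) 2 μ)
    (n : ℕ) {x y a b : ℝ} (hx : 0 < x) (hy : 0 < y) (ha : 0 ≤ a) (hb : 0 < b) :
    μ {ω | x ≤ |M n ω| /
          (a + b * ∑ k ∈ Finset.Icc 1 n,
            (μ[fun ω' => (M k ω' - M (k - 1) ω') ^ 2 | ℱ (k - 1)]) ω) ∧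
        (∑ k ∈ Finset.Icc 1 n, (M k ω - M (k - 1) ω) ^ 2) + y ≤
          ∑ k ∈ Finset.Icc 1 n,
            (μ[fun ω' => (M k ω' - M (k - 1) ω') ^ 2 | ℱ (k - 1)]) ω}
      ≤ ENNReal.ofReal (2 * Real.exp (-x ^ 2 * (a * b + b ^ 2 * y / 2))) :=
  self_normalized_martingale_two_sided_inequality_general hM hM0 hMsq n hx hb
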